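/- arXiv:1909.07324 — 6 statements merged into one kernel-verified Lean document; each statement's English description precedes it below -/
import Mathlib

section
/- Fix real numbers T1 < T2, an integer k ≥ 1, and let θ_k ∈ ℝ^k be defined by (θ_k)_i = T1 + i(T2−T1)/(k+1) for i = 1,…,k. Then the Dirichlet depth for a homogeneous Poisson process satisfies D_c(θ_k | k) = 1 = sup_{s ∈ S_k} D_c(s | k), and θ_k is the unique maximizer of D_c(· | k) over S_k. -/
/-!
The `k + 1` normalized gaps `(s_i - s_{i-1}) / (T2 - T1)` of `s ∈ S_k` are nonnegative and sum
to `1`, and `D_c(s | k) / (k + 1)` is their geometric mean. By AM-GM it is at most their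
arithmetic mean `1 / (k + 1)`, with equality exactly when all gaps are equal. A realization is
determined by its gaps, and `θ_k` is the one whose gaps are all equal.
-/

open MeasureTheory Filter Set

/-- Extended event sequence: `extSeq T1 T2 k s i` is `T1` for `i = 0`,
`s_(i)` for `1 ≤ i ≤ k` and `T2` for `i > k` (conventions `s_0 = T1`, `s_{k+1} = T2`). -/
noncomputable def extSeq (T1 T2 : ℝ) (k : ℕ) (s : Fin k → ℝ) : ℕ → ℝ :=
  fun i => if h0 : i = 0 then T1 else if h : i ≤ k then s ⟨i - 1, by omega⟩ else T2

/-- The set of point-process realizations with `k` events on `[T1, T2]`: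
ordered `k`-tuples `T1 ≤ s_1 ≤ ⋯ ≤ s_k ≤ T2`. -/
def Sk (T1 T2 : ℝ) (k : ℕ) : Set (Fin k → ℝ) :=
  {s | Monotone s ∧ (∀ i, T1 ≤ s i) ∧ (∀ i, s i ≤ T2)}

/-- The Dirichlet depth for a homogeneous Poisson process conditioned on `k` events. -/
noncomputable def DcHPP (T1 T2 : ℝ) (k : ℕ) (s : Fin k → ℝ) : ℝ :=
  ((k : ℝ) + 1) * ∏ i ∈ Finset.range (k + 1),
    ((extSeq T1 T2 k s (i + 1) - extSeq T1 T2 k s i) / (T2 - T1)) ^ ((1 : ℝ) / ((k : ℝ) + 1))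

/-- The general Dirichlet depth relative to a conditional mean vector `μ`. -/
noncomputable def DcGen (T1 T2 : ℝ) (k : ℕ) (μ : Fin k → ℝ) (s : Fin k → ℝ) : ℝ :=
  ∏ i ∈ Finset.range (k + 1),
    ((extSeq T1 T2 k s (i + 1) - extSeq T1 T2 k s i) /
        (extSeq T1 T2 k μ (i + 1) - extSeq T1 T2 k μ i)) ^
      ((extSeq T1 T2 k μ (i + 1) - extSeq T1 T2 k μ i) / (T2 - T1))

/-- The time-rescaling-based Dirichlet depth relative to a cumulative intensity `Λ`. -/
noncomputable def DcTS (T1 T2 : ℝ) (k : ℕ) (Λ : ℝ → ℝ) (s : Fin k → ℝ) : ℝ :=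
  ((k : ℝ) + 1) * ∏ i ∈ Finset.range (k + 1),
    ((Λ (extSeq T1 T2 k s (i + 1)) - Λ (extSeq T1 T2 k s i)) / Λ T2) ^ ((1 : ℝ) / ((k : ℝ) + 1))

open Finset

namespace Real

variable {ι : Type*} (s : Finset ι) {w : ℝ} (z : ι → ℝ)

theorem prod_rpow_le_mul_sum_of_card_mul_eq_one (hw : (s.card : ℝ) * w = 1)
    (hz : ∀ i ∈ s, 0 ≤ z i) : ∏ i ∈ s, z i ^ w ≤ w * ∑ i ∈ s, z i := by
  have hw₀ : 0 ≤ w := (pos_of_mul_pos_right (hw ▸ zero_lt_one) (Nat.cast_nonneg _)).le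
  rw [mul_sum]
  exact geom_mean_le_arith_mean_weighted s (fun _ => w) z (fun _ _ => hw₀)
    (by rw [sum_const, nsmul_eq_mul, hw]) hz

theorem prod_rpow_eq_mul_sum_iff_of_card_mul_eq_one (hw : (s.card : ℝ) * w = 1)
    (hz : ∀ i ∈ s, 0 ≤ z i) :
    ∏ i ∈ s, z i ^ w = w * ∑ i ∈ s, z i ↔ ∀ j ∈ s, z j = w * ∑ i ∈ s, z i := by
  have hw₀ : 0 < w := pos_of_mul_pos_right (hw ▸ zero_lt_one) (Nat.cast_nonneg _)
  rw [mul_sum]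
  exact geom_mean_eq_arith_mean_weighted_iff_of_pos' s (fun _ => w) z (fun _ _ => hw₀)
    (by rw [sum_const, nsmul_eq_mul, hw]) hz

end Real

section extSeq

variable {T1 T2 : ℝ} {k : ℕ} (s : Fin k → ℝ)

@[simp]
theorem extSeq_zero : extSeq T1 T2 k s 0 = T1 := by
  simp [extSeq]

theorem extSeq_succ_of_lt {i : ℕ} (hi : i < k) : extSeq T1 T2 k s (i + 1) = s ⟨i, hi⟩ := by
  simp [extSeq, Nat.succ_le_of_lt hi]

theorem extSeq_of_lt {i : ℕ} (hi : k < i) : extSeq T1 T2 k s i = T2 := by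
  simp [extSeq, hi.not_ge, Nat.ne_zero_of_lt hi]

theorem sum_range_extSeq_sub :
    ∑ i ∈ range (k + 1), (extSeq T1 T2 k s (i + 1) - extSeq T1 T2 k s i) = T2 - T1 := by
  rw [sum_range_sub, extSeq_zero, extSeq_of_lt s k.lt_succ_self]

theorem extSeq_mem_Icc (hT : T1 ≤ T2) (hs : s ∈ Sk T1 T2 k) (i : ℕ) :
    extSeq T1 T2 k s i ∈ Icc T1 T2 := by
  unfold extSeq
  split_ifs <;> simp [hT, hs.2.1, hs.2.2]

theorem monotone_extSeq (hT : T1 ≤ T2) (hs : s ∈ Sk T1 T2 k) :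
    Monotone (extSeq T1 T2 k s) := by
  refine monotone_nat_of_le_succ fun i => ?_
  rcases lt_or_ge i k with hi | hi
  · rw [extSeq_succ_of_lt s hi]
    cases i with
    | zero => exact (extSeq_zero s).trans_le (hs.2.1 _)
    | succ j => rw [extSeq_succ_of_lt s (by omega)]; exact hs.1 (Fin.mk_le_mk.2 j.le_succ)
  · rw [extSeq_of_lt s (Nat.lt_succ_of_le hi)]
    exact (extSeq_mem_Icc s hT hs i).2

theorem eq_of_extSeq_succ_sub_eq {s t : Fin k → ℝ}
    (h : ∀ i < k, extSeq T1 T2 k s (i + 1) - extSeq T1 T2 k s i =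
      extSeq T1 T2 k t (i + 1) - extSeq T1 T2 k t i) : s = t := by
  have hst : ∀ i ≤ k, extSeq T1 T2 k s i = extSeq T1 T2 k t i := by
    intro i hi
    induction i with
    | zero => simp
    | succ j ih => linarith [h j hi, ih (by omega)]
  funext ⟨i, hi⟩
  rw [← extSeq_succ_of_lt s hi, ← extSeq_succ_of_lt t hi, hst (i + 1) hi]

end extSeq

section uniformGrid

variable {T1 T2 : ℝ} {k : ℕ}

noncomputable def uniformGrid (T1 T2 : ℝ) (k : ℕ) : Fin k → ℝ :=
  fun i => T1 + ((i : ℝ) + 1) * (T2 - T1) / ((k : ℝ) + 1)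

theorem extSeq_uniformGrid {i : ℕ} (hi : i ≤ k + 1) :
    extSeq T1 T2 k (uniformGrid T1 T2 k) i = T1 + i * (T2 - T1) / ((k : ℝ) + 1) := by
  rcases i with _ | j
  · simp
  rcases (Nat.lt_succ_iff.1 hi).lt_or_eq with hj | rfl
  · rw [extSeq_succ_of_lt _ hj, uniformGrid]
    push_cast
    ring
  · rw [extSeq_of_lt _ (Nat.lt_succ_self _)]
    field_simp
    push_cast
    ring

theorem extSeq_uniformGrid_succ_sub {i : ℕ} (hi : i ≤ k) :
    extSeq T1 T2 k (uniformGrid T1 T2 k) (i + 1) - extSeq T1 T2 k (uniformGrid T1 T2 k) i =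
      (T2 - T1) / ((k : ℝ) + 1) := by
  rw [extSeq_uniformGrid (by omega), extSeq_uniformGrid (by omega)]
  push_cast
  ring

theorem uniformGrid_mem_Sk (hT : T1 ≤ T2) : uniformGrid T1 T2 k ∈ Sk T1 T2 k := by
  have hk : (0 : ℝ) < k + 1 := by positivity
  refine ⟨fun a b hab => ?_, fun i => ?_, fun i => ?_⟩ <;> simp only [uniformGrid]
  · gcongr
    exact_mod_cast hab
  · have : 0 ≤ ((i : ℝ) + 1) * (T2 - T1) / ((k : ℝ) + 1) := by
      have := sub_nonneg.2 hT
      positivity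
    linarith
  · have hik : (i : ℝ) + 1 ≤ k + 1 := by gcongr; exact_mod_cast i.2.le
    have : ((i : ℝ) + 1) * (T2 - T1) / ((k : ℝ) + 1) ≤ T2 - T1 := by
      rw [div_le_iff₀ hk]
      nlinarith
    linarith

end uniformGrid

section DcHPP

variable {T1 T2 : ℝ} {k : ℕ} (s : Fin k → ℝ)

theorem sum_range_extSeq_sub_div (hT : T1 < T2) :
    ∑ i ∈ range (k + 1), (extSeq T1 T2 k s (i + 1) - extSeq T1 T2 k s i) / (T2 - T1) = 1 := by
  rw [← sum_div, sum_range_extSeq_sub, div_self (sub_pos.2 hT).ne']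

theorem extSeq_succ_sub_div_nonneg (hT : T1 < T2) (hs : s ∈ Sk T1 T2 k) (i : ℕ) :
    0 ≤ (extSeq T1 T2 k s (i + 1) - extSeq T1 T2 k s i) / (T2 - T1) :=
  div_nonneg (sub_nonneg.2 (monotone_extSeq s hT.le hs i.le_succ)) (sub_pos.2 hT).le

theorem card_range_succ_mul_one_div (k : ℕ) :
    ((range (k + 1)).card : ℝ) * (1 / ((k : ℝ) + 1)) = 1 := by
  rw [card_range, Nat.cast_succ, mul_one_div_cancel (by positivity)]

theorem DcHPP_le_one (hT : T1 < T2) (hs : s ∈ Sk T1 T2 k) : DcHPP T1 T2 k s ≤ 1 := by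
  have amgm := Real.prod_rpow_le_mul_sum_of_card_mul_eq_one _ _ (card_range_succ_mul_one_div k)
    fun i _ => extSeq_succ_sub_div_nonneg s hT hs i
  rw [sum_range_extSeq_sub_div s hT, mul_one] at amgm
  calc DcHPP T1 T2 k s ≤ ((k : ℝ) + 1) * (1 / ((k : ℝ) + 1)) := by unfold DcHPP; gcongr
    _ = 1 := mul_one_div_cancel (by positivity)

theorem DcHPP_eq_one_iff (hT : T1 < T2) (hs : s ∈ Sk T1 T2 k) :
    DcHPP T1 T2 k s = 1 ↔ ∀ i ≤ k,
      extSeq T1 T2 k s (i + 1) - extSeq T1 T2 k s i = (T2 - T1) / ((k : ℝ) + 1) := by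
  have amgm := Real.prod_rpow_eq_mul_sum_iff_of_card_mul_eq_one _ _
    (card_range_succ_mul_one_div k) fun i _ => extSeq_succ_sub_div_nonneg s hT hs i
  simp only [sum_range_extSeq_sub_div s hT, mul_one, mem_range_succ_iff] at amgm
  unfold DcHPP
  rw [mul_comm, ← eq_div_iff (by positivity), amgm]
  refine forall₂_congr fun i _ => ?_
  rw [div_eq_iff (sub_pos.2 hT).ne', one_div_mul_eq_div]

end DcHPP

theorem stmt4_general (T1 T2 : ℝ) (h : T1 < T2) (k : ℕ)
    (θ : Fin k → ℝ)
    (hθ : ∀ i : Fin k, θ i = T1 + ((i : ℝ) + 1) * (T2 - T1) / ((k : ℝ) + 1)) :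
    θ ∈ Sk T1 T2 k ∧
    DcHPP T1 T2 k θ = 1 ∧
    (∀ s ∈ Sk T1 T2 k, DcHPP T1 T2 k s ≤ 1) ∧
    (∀ s ∈ Sk T1 T2 k, DcHPP T1 T2 k s = 1 → s = θ) := by
  obtain rfl : θ = uniformGrid T1 T2 k := funext hθ
  have hθS := uniformGrid_mem_Sk (k := k) h.le
  have hθgap {i : ℕ} (hi : i ≤ k) := extSeq_uniformGrid_succ_sub (T1 := T1) (T2 := T2) hi
  refine ⟨hθS, (DcHPP_eq_one_iff _ h hθS).2 fun i hi => hθgap hi,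
    fun s hs => DcHPP_le_one s h hs, fun s hs hs1 => ?_⟩
  refine eq_of_extSeq_succ_sub_eq (T1 := T1) (T2 := T2) fun i hi => ?_
  rw [(DcHPP_eq_one_iff s h hs).1 hs1 i hi.le, hθgap hi.le]

theorem stmt4 (T1 T2 : ℝ) (h : T1 < T2) (k : ℕ) (hk : 1 ≤ k)
    (θ : Fin k → ℝ)
    (hθ : ∀ i : Fin k, θ i = T1 + ((i : ℝ) + 1) * (T2 - T1) / ((k : ℝ) + 1)) :
    θ ∈ Sk T1 T2 k ∧
    DcHPP T1 T2 k θ = 1 ∧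
    (∀ s ∈ Sk T1 T2 k, DcHPP T1 T2 k s ≤ 1) ∧
    (∀ s ∈ Sk T1 T2 k, DcHPP T1 T2 k s = 1 → s = θ) :=
  stmt4_general T1 T2 h k θ hθ
end

section
/- Fix real numbers T1 < T2, an integer k ≥ 1, and let θ_k ∈ ℝ^k be given by (θ_k)_i = T1 + i(T2−T1)/(k+1). Then for every s ∈ S_k and every a ∈ [0,1], the point θ_k + a(s − θ_k) belongs to S_k and D_c(s | k) ≤ D_c(θ_k + a(s − θ_k) | k); i.e., the Dirichlet depth is monotone nonincreasing along rays emanating from the deepest point θ_k. -/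
open MeasureTheory Filter Set

theorem stmt5 (T1 T2 : ℝ) (h : T1 < T2) (k : ℕ) (hk : 1 ≤ k)
    (θ : Fin k → ℝ)
    (hθ : ∀ i : Fin k, θ i = T1 + ((i : ℝ) + 1) * (T2 - T1) / ((k : ℝ) + 1)) :
    ∀ s ∈ Sk T1 T2 k, ∀ a ∈ Set.Icc (0 : ℝ) 1,
      (fun i => θ i + a * (s i - θ i)) ∈ Sk T1 T2 k ∧
      DcHPP T1 T2 k s ≤ DcHPP T1 T2 k (fun i => θ i + a * (s i - θ i)) := by
  intro s hs a ha
  obtain ⟨hmono, hl, hu⟩ := hs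
  obtain ⟨ha0, ha1⟩ := ha
  have hT : (0:ℝ) < T2 - T1 := by linarith
  have hTne : T2 - T1 ≠ 0 := ne_of_gt hT
  have hk1 : (0:ℝ) < (k:ℝ) + 1 := by positivity
  -- θ bounds and monotonicity
  have hθlo : ∀ i : Fin k, T1 ≤ θ i := by
    intro i; rw [hθ]
    have : (0:ℝ) ≤ ((i:ℝ)+1) * (T2-T1) / ((k:ℝ)+1) := by positivity
    linarith
  have hθhi : ∀ i : Fin k, θ i ≤ T2 := by
    intro i; rw [hθ]
    have hik : (i:ℝ) + 1 ≤ (k:ℝ) := by exact_mod_cast i.isLt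
    have : ((i:ℝ)+1) * (T2-T1) / ((k:ℝ)+1) ≤ T2 - T1 := by
      rw [div_le_iff₀ hk1]; nlinarith
    linarith
  have hθmono : ∀ i j : Fin k, i ≤ j → θ i ≤ θ j := by
    intro i j hij; rw [hθ, hθ]
    have hij' : (i:ℝ) ≤ (j:ℝ) := by exact_mod_cast hij
    gcongr <;> linarith
  set t : Fin k → ℝ := fun i => θ i + a * (s i - θ i) with ht
  -- membership
  have hmem : t ∈ Sk T1 T2 k := by
    refine ⟨?_, ?_, ?_⟩
    · intro i j hij
      have h1 := hθmono i j hij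
      have h2 := hmono hij
      simp only [ht]
      nlinarith
    · intro i
      have h1 := hθlo i
      have h2 := hl i
      simp only [ht]
      nlinarith
    · intro i
      have h1 := hθhi i
      have h2 := hu i
      simp only [ht]
      nlinarith
  refine ⟨hmem, ?_⟩
  -- extSeq computations
  have extt : ∀ i : ℕ, extSeq T1 T2 k t i
      = extSeq T1 T2 k θ i + a * (extSeq T1 T2 k s i - extSeq T1 T2 k θ i) := by
    intro i; unfold extSeq; split_ifs <;> ring
  set c : ℝ := (T2 - T1) / ((k:ℝ) + 1) with hc
  have hcpos : 0 < c := by positivity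
  have extθ : ∀ i : ℕ, i ≤ k + 1 → extSeq T1 T2 k θ i = T1 + i * c := by
    intro i hi; unfold extSeq
    split_ifs with h0 hik
    · subst h0; simp
    · rw [hθ]
      have h1 : 1 ≤ i := Nat.one_le_iff_ne_zero.mpr h0
      have hcast : ((⟨i - 1, by omega⟩ : Fin k) : ℝ) = (i:ℝ) - 1 := by
        simp only [Fin.val_mk]
        push_cast [Nat.cast_sub h1]
        ring
      rw [hcast, hc]; field_simp
      all_goals ring
    · have hik1 : i = k + 1 := by omega
      subst hik1
      rw [hc]; push_cast; field_simp
      all_goals ring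
  have gapθ : ∀ i ≤ k, extSeq T1 T2 k θ (i+1) - extSeq T1 T2 k θ i = c := by
    intro i hi
    rw [extθ (i+1) (by omega), extθ i (by omega)]
    push_cast; ring
  have step : ∀ i : ℕ, extSeq T1 T2 k s i ≤ extSeq T1 T2 k s (i+1) := by
    intro i
    unfold extSeq
    split_ifs
    all_goals try contradiction
    all_goals try omega
    all_goals try exact le_refl _
    all_goals try exact hl _
    all_goals try exact hu _
    all_goals try linarith
    all_goals exact hmono (Fin.mk_le_mk.mpr (by omega))
  have ext0 : extSeq T1 T2 k s 0 = T1 := by unfold extSeq; simp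
  have extk1 : extSeq T1 T2 k s (k+1) = T2 := by
    unfold extSeq; rw [dif_neg (by omega), dif_neg (by omega)]
  have gapsum : ∑ i ∈ Finset.range (k+1),
      (extSeq T1 T2 k s (i+1) - extSeq T1 T2 k s i) = T2 - T1 := by
    rw [Finset.sum_range_sub (fun i => extSeq T1 T2 k s i), ext0, extk1]
  -- normalized gaps
  set w : ℝ := 1 / ((k:ℝ) + 1) with hw
  have hwpos : 0 < w := by positivity
  set f : ℕ → ℝ := fun i => (extSeq T1 T2 k s (i+1) - extSeq T1 T2 k s i) / (T2 - T1) with hf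
  have hfnn : ∀ i, 0 ≤ f i := by
    intro i; have := step i
    exact div_nonneg (by linarith) (le_of_lt hT)
  have hfsum : ∑ i ∈ Finset.range (k+1), f i = 1 := by
    rw [hf, ← Finset.sum_div, gapsum, div_self hTne]
  have hcw : c / (T2 - T1) = w := by
    rw [hc, hw]; field_simp
  -- the t-gaps
  have gapt : ∀ i ∈ Finset.range (k+1),
      (extSeq T1 T2 k t (i+1) - extSeq T1 T2 k t i) / (T2 - T1) = a * f i + (1 - a) * w := by
    intro i hi
    have hik : i ≤ k := by simpa using Finset.mem_range_succ_iff.mp hi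
    rw [extt (i+1), extt i]
    have heq : extSeq T1 T2 k θ (i+1) + a * (extSeq T1 T2 k s (i+1) - extSeq T1 T2 k θ (i+1)) -
        (extSeq T1 T2 k θ i + a * (extSeq T1 T2 k s i - extSeq T1 T2 k θ i))
        = a * (extSeq T1 T2 k s (i+1) - extSeq T1 T2 k s i) + (1 - a) *
          (extSeq T1 T2 k θ (i+1) - extSeq T1 T2 k θ i) := by ring
    rw [heq, gapθ i hik, ← hcw]
    simp only [hf]
    field_simp
    all_goals ring
  -- key inequality on products
  set G : ℝ := ∏ i ∈ Finset.range (k+1), (f i) ^ w with hG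
  have hGnn : 0 ≤ G := Finset.prod_nonneg fun i _ => Real.rpow_nonneg (hfnn i) w
  have hGw : G ≤ w := by
    have hsum1 : ∑ _i ∈ Finset.range (k+1), w = 1 := by
      simp only [Finset.sum_const, Finset.card_range, nsmul_eq_mul, hw]
      push_cast; field_simp
    have := Real.geom_mean_le_arith_mean_weighted (Finset.range (k+1)) (fun _ => w) f
      (fun i _ => le_of_lt hwpos) hsum1 (fun i _ => hfnn i)
    calc G ≤ ∑ i ∈ Finset.range (k+1), w * f i := this
      _ = w * ∑ i ∈ Finset.range (k+1), f i := by rw [Finset.mul_sum]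
      _ = w := by rw [hfsum, mul_one]
  have hGsplit : G = G ^ a * G ^ (1 - a) := by
    rw [← Real.rpow_add' hGnn (by norm_num : a + (1 - a) ≠ 0)]
    norm_num
  have hstep1 : G ≤ G ^ a * w ^ (1 - a) := by
    calc G = G ^ a * G ^ (1 - a) := hGsplit
      _ ≤ G ^ a * w ^ (1 - a) := mul_le_mul_of_nonneg_left
        (Real.rpow_le_rpow hGnn hGw (show (0:ℝ) ≤ 1 - a by linarith)) (Real.rpow_nonneg hGnn a)
  have hwk : w * ((k:ℝ) + 1) = 1 := by rw [hw]; field_simp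
  have hprodeq : G ^ a * w ^ (1 - a)
      = ∏ i ∈ Finset.range (k+1), ((f i) ^ a * w ^ (1 - a)) ^ w := by
    have e1 : ∀ i ∈ Finset.range (k+1), ((f i) ^ a * w ^ (1 - a)) ^ w
        = ((f i) ^ w) ^ a * w ^ ((1 - a) * w) := by
      intro i _
      rw [Real.mul_rpow (Real.rpow_nonneg (hfnn i) a) (Real.rpow_nonneg hwpos.le _),
        ← Real.rpow_mul (hfnn i), ← Real.rpow_mul hwpos.le, mul_comm a w,
        Real.rpow_mul (hfnn i)]
    rw [Finset.prod_congr rfl e1, Finset.prod_mul_distrib, Finset.prod_const,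
      Finset.card_range,
      Real.finset_prod_rpow _ _ (fun i _ => Real.rpow_nonneg (hfnn i) w) a, ← hG,
      ← Real.rpow_natCast (w ^ ((1 - a) * w)) (k+1), ← Real.rpow_mul hwpos.le]
    congr 1
    push_cast
    rw [mul_assoc, hwk, mul_one]
  have hfac : ∀ i ∈ Finset.range (k+1),
      ((f i) ^ a * w ^ (1 - a)) ^ w ≤ (a * f i + (1 - a) * w) ^ w := by
    intro i _
    refine Real.rpow_le_rpow
      (mul_nonneg (Real.rpow_nonneg (hfnn i) a) (Real.rpow_nonneg hwpos.le (1 - a))) ?_ hwpos.le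
    exact Real.geom_mean_le_arith_mean2_weighted ha0 (by linarith) (hfnn i) hwpos.le (by ring)
  have key : G ≤ ∏ i ∈ Finset.range (k+1), (a * f i + (1 - a) * w) ^ w := by
    refine hstep1.trans ?_
    rw [hprodeq]
    exact Finset.prod_le_prod (fun i _ =>
      Real.rpow_nonneg (mul_nonneg (Real.rpow_nonneg (hfnn i) a)
        (Real.rpow_nonneg hwpos.le (1 - a))) w) hfac
  -- conclude
  rw [DcHPP, DcHPP]
  refine mul_le_mul_of_nonneg_left ?_ hk1.le
  rw [show (1:ℝ)/((k:ℝ)+1) = w from hw.symm]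
  calc ∏ i ∈ Finset.range (k+1),
        ((extSeq T1 T2 k s (i+1) - extSeq T1 T2 k s i) / (T2 - T1)) ^ w
      = G := by rw [hG]
    _ ≤ ∏ i ∈ Finset.range (k+1), (a * f i + (1 - a) * w) ^ w := key
    _ = ∏ i ∈ Finset.range (k+1),
        ((extSeq T1 T2 k t (i+1) - extSeq T1 T2 k t i) / (T2 - T1)) ^ w := by
      exact Finset.prod_congr rfl fun i hi => by rw [gapt i hi]
end

section
/- Fix real numbers T1 < T2 and an integer k ≥ 1. For any a > 0 and b ∈ ℝ, and any s ∈ S_k (relative to the domain [T1,T2]), the transformed realization s' = a·s + b·(1,…,1) lies in the set S'_k of ordered k-tuples in [aT1+b, aT2+b], and the Dirichlet depth computed relative to the domain [aT1+b, aT2+b] satisfies D_c(s' | k, aT1+b, aT2+b) = D_c(s | k, T1, T2); i.e., the Dirichlet depth for a homogeneous Poisson process is invariant under scaling and shifting of the time domain. -/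
open MeasureTheory Filter Set

lemma extSeq_affine (T1 T2 : ℝ) (k : ℕ) (s : Fin k → ℝ) (a b : ℝ) (n : ℕ) :
    extSeq (a * T1 + b) (a * T2 + b) k (fun i => a * s i + b) n
      = a * extSeq T1 T2 k s n + b := by
  unfold extSeq
  by_cases h0 : n = 0 <;> simp [h0] <;> by_cases hn : n ≤ k <;> simp [hn]

theorem stmt6 (T1 T2 : ℝ) (h : T1 < T2) (k : ℕ) (hk : 1 ≤ k)
    (a b : ℝ) (ha : 0 < a) :
    ∀ s ∈ Sk T1 T2 k,
      (fun i => a * s i + b) ∈ Sk (a * T1 + b) (a * T2 + b) k ∧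
      DcHPP (a * T1 + b) (a * T2 + b) k (fun i => a * s i + b) = DcHPP T1 T2 k s := by
  intro s hs
  obtain ⟨hm, hl, hu⟩ := hs
  constructor
  · refine ⟨fun i j hij => ?_, fun i => ?_, fun i => ?_⟩
    · have := hm hij
      dsimp only; nlinarith
    · have := hl i; dsimp only; nlinarith
    · have := hu i; dsimp only; nlinarith
  · unfold DcHPP
    congr 1
    apply Finset.prod_congr rfl
    intro i _
    rw [extSeq_affine, extSeq_affine]
    have hT : a * T2 + b - (a * T1 + b) = a * (T2 - T1) := by ring
    have hnum : a * extSeq T1 T2 k s (i + 1) + b - (a * extSeq T1 T2 k s i + b)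
        = a * (extSeq T1 T2 k s (i + 1) - extSeq T1 T2 k s i) := by ring
    rw [hT, hnum, mul_div_mul_left _ _ (ne_of_gt ha)]
end

section
/- Fix real numbers T1 < T2, an integer k ≥ 1, a strictly increasing continuous function Λ : [T1,T2] → ℝ with Λ(T1) = 0 and Λ(T2) > 0, and a time warping function γ : [T1,T2] → [T1,T2] (γ(T1)=T1, γ(T2)=T2, γ strictly increasing and bijective). Let Λ_γ = Λ ∘ γ^{-1}. Then for every s = (s_1,…,s_k) ∈ S_k, the warped realization γ(s) = (γ(s_1),…,γ(s_k)) lies in S_k and the TS-based Dirichlet depth is invariant: D_{c-TS}(γ(s) | k, Λ_γ) = D_{c-TS}(s | k, Λ). -/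
open MeasureTheory Filter Set

lemma extSeq_mem (T1 T2 : ℝ) (h : T1 ≤ T2) (k : ℕ) (s : Fin k → ℝ)
    (hs : s ∈ Sk T1 T2 k) (i : ℕ) : extSeq T1 T2 k s i ∈ Set.Icc T1 T2 := by
  obtain ⟨_, h1, h2⟩ := hs
  unfold extSeq
  split_ifs with h0 hik
  · exact ⟨le_refl _, h⟩
  · exact ⟨h1 _, h2 _⟩
  · exact ⟨h, le_refl _⟩

lemma extSeq_comp (T1 T2 : ℝ) (k : ℕ) (s : Fin k → ℝ) (γ : ℝ → ℝ)
    (hγT1 : γ T1 = T1) (hγT2 : γ T2 = T2) (i : ℕ) :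
    extSeq T1 T2 k (fun j => γ (s j)) i = γ (extSeq T1 T2 k s i) := by
  unfold extSeq
  split_ifs with h0 hik
  · exact hγT1.symm
  · rfl
  · exact hγT2.symm

theorem stmt15 (T1 T2 : ℝ) (h : T1 < T2) (k : ℕ) (hk : 1 ≤ k)
    (Λ : ℝ → ℝ) (hΛcont : ContinuousOn Λ (Set.Icc T1 T2))
    (hΛmono : StrictMonoOn Λ (Set.Icc T1 T2)) (hΛ0 : Λ T1 = 0) (hΛpos : 0 < Λ T2)
    (γ γinv : ℝ → ℝ) (hγT1 : γ T1 = T1) (hγT2 : γ T2 = T2)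
    (hγmono : StrictMonoOn γ (Set.Icc T1 T2))
    (hγmaps : Set.MapsTo γ (Set.Icc T1 T2) (Set.Icc T1 T2))
    (hγsurj : Set.SurjOn γ (Set.Icc T1 T2) (Set.Icc T1 T2))
    (hinv1 : ∀ t ∈ Set.Icc T1 T2, γinv (γ t) = t)
    (hinv2 : ∀ t ∈ Set.Icc T1 T2, γ (γinv t) = t) :
    ∀ s ∈ Sk T1 T2 k,
      (fun i => γ (s i)) ∈ Sk T1 T2 k ∧
      DcTS T1 T2 k (Λ ∘ γinv) (fun i => γ (s i)) = DcTS T1 T2 k Λ s := by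
  intro s hs
  obtain ⟨hmono, h1, h2⟩ := hs
  have hmem : ∀ i, s i ∈ Set.Icc T1 T2 := fun i => ⟨h1 i, h2 i⟩
  constructor
  · refine ⟨fun i j hij => ?_, fun i => ?_, fun i => ?_⟩
    · exact (hγmono.monotoneOn (hmem i) (hmem j)) (hmono hij)
    · exact (hγmaps (hmem i)).1
    · exact (hγmaps (hmem i)).2
  · have hinvT2 : γinv T2 = T2 := by
      have := hinv1 T2 ⟨h.le, le_refl _⟩
      rwa [hγT2] at this
    unfold DcTS
    congr 1
    apply Finset.prod_congr rfl
    intro i _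
    rw [extSeq_comp T1 T2 k s γ hγT1 hγT2, extSeq_comp T1 T2 k s γ hγT1 hγT2]
    simp only [Function.comp_apply, hinvT2,
      hinv1 _ (extSeq_mem T1 T2 h.le k s ⟨hmono, h1, h2⟩ (i+1)),
      hinv1 _ (extSeq_mem T1 T2 h.le k s ⟨hmono, h1, h2⟩ i)]
end

section
/- Fix real numbers T1 < T2, an integer k ≥ 1, and a strictly increasing continuous function Λ : [T1,T2] → ℝ with Λ(T1) = 0 and Λ(T2) > 0 (the cumulative intensity of an inhomogeneous Poisson process). Let s* ∈ S_k be defined by s*_i = Λ^{-1}(i·Λ(T2)/(k+1)) for i = 1,…,k. Then D_{c-TS}(s* | k, Λ) = 1 = sup_{s ∈ S_k} D_{c-TS}(s | k, Λ), and s* is the unique maximizer of D_{c-TS}(· | k, Λ) over S_k. -/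
open MeasureTheory Filter Set

lemma amgm_aux (n : ℕ) (y : ℕ → ℝ) (h0 : ∀ i ∈ Finset.range n, 0 ≤ y i)
    (hsum : ∑ i ∈ Finset.range n, y i = n) :
    (∏ i ∈ Finset.range n, y i ≤ 1) ∧
    ((∏ i ∈ Finset.range n, y i) = 1 → ∀ i ∈ Finset.range n, y i = 1) := by
  by_cases hpos : ∀ i ∈ Finset.range n, 0 < y i
  · have hlog : ∏ i ∈ Finset.range n, y i
        = Real.exp (∑ i ∈ Finset.range n, Real.log (y i)) := by
      rw [Real.exp_sum]
      exact Finset.prod_congr rfl fun i hi => (Real.exp_log (hpos i hi)).symm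
    have hsum1 : ∑ i ∈ Finset.range n, (y i - 1) = 0 := by
      rw [Finset.sum_sub_distrib, hsum]; simp
    constructor
    · rw [hlog, ← Real.exp_zero]
      apply Real.exp_le_exp.mpr
      rw [← hsum1]
      exact Finset.sum_le_sum fun i hi => Real.log_le_sub_one_of_pos (hpos i hi)
    · intro hprod i hi
      by_contra hne
      have hstrict : ∑ j ∈ Finset.range n, Real.log (y j)
          < ∑ j ∈ Finset.range n, (y j - 1) :=
        Finset.sum_lt_sum (fun j hj => Real.log_le_sub_one_of_pos (hpos j hj))
          ⟨i, hi, Real.log_lt_sub_one_of_pos (hpos i hi) hne⟩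
      have hlt : ∏ j ∈ Finset.range n, y j < 1 := by
        rw [hlog, ← Real.exp_zero]
        exact Real.exp_lt_exp.mpr (by linarith [hsum1 ▸ hstrict])
      linarith [hprod ▸ hlt]
  · push_neg at hpos
    obtain ⟨j, hj, hjle⟩ := hpos
    have hj0 : y j = 0 := le_antisymm hjle (h0 j hj)
    have hz : ∏ i ∈ Finset.range n, y i = 0 := Finset.prod_eq_zero hj hj0
    rw [hz]
    exact ⟨zero_le_one, fun h1 => absurd h1 (by norm_num)⟩

theorem stmt16 (T1 T2 : ℝ) (h : T1 < T2) (k : ℕ) (hk : 1 ≤ k)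
    (Λ : ℝ → ℝ) (hΛcont : ContinuousOn Λ (Set.Icc T1 T2))
    (hΛmono : StrictMonoOn Λ (Set.Icc T1 T2)) (hΛ0 : Λ T1 = 0) (hΛpos : 0 < Λ T2)
    (sstar : Fin k → ℝ)
    (hsstar : ∀ i : Fin k, sstar i ∈ Set.Icc T1 T2 ∧
      Λ (sstar i) = ((i : ℝ) + 1) * Λ T2 / ((k : ℝ) + 1)) :
    sstar ∈ Sk T1 T2 k ∧
    DcTS T1 T2 k Λ sstar = 1 ∧
    (∀ s ∈ Sk T1 T2 k, DcTS T1 T2 k Λ s ≤ 1) ∧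
    (∀ s ∈ Sk T1 T2 k, DcTS T1 T2 k Λ s = 1 → s = sstar) := by
  have hT : T1 ≤ T2 := h.le
  have hmemT1 : T1 ∈ Set.Icc T1 T2 := ⟨le_refl _, hT⟩
  have hmemT2 : T2 ∈ Set.Icc T1 T2 := ⟨hT, le_refl _⟩
  set w := Λ T2 with hwdef
  have hw : 0 < w := hΛpos
  have hkpos : (0:ℝ) < (k:ℝ) + 1 := by positivity
  set c : ℝ := (1:ℝ) / ((k:ℝ) + 1) with hcdef
  have hc : 0 < c := by positivity
  have hck : c * ((k:ℝ) + 1) = 1 := by rw [hcdef]; field_simp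
  have hsmem : ∀ i : Fin k, sstar i ∈ Set.Icc T1 T2 := fun i => (hsstar i).1
  have hsval : ∀ i : Fin k, Λ (sstar i) = ((i:ℝ) + 1) * w / ((k:ℝ) + 1) :=
    fun i => (hsstar i).2
  -- sstar ∈ Sk
  have hstar_mono : Monotone sstar := by
    intro i j hij
    rw [← hΛmono.le_iff_le (hsmem i) (hsmem j), hsval i, hsval j]
    have hij' : (i:ℝ) ≤ (j:ℝ) := by exact_mod_cast hij
    gcongr
  have hstarSk : sstar ∈ Sk T1 T2 k := ⟨hstar_mono, fun i => (hsmem i).1, fun i => (hsmem i).2⟩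
  -- generic facts about extSeq for s ∈ Sk
  have he0 : ∀ s : Fin k → ℝ, extSeq T1 T2 k s 0 = T1 := by intro s; simp [extSeq]
  have hetop : ∀ s : Fin k → ℝ, extSeq T1 T2 k s (k+1) = T2 := by
    intro s
    unfold extSeq
    rw [dif_neg (by omega), dif_neg (by omega)]
  have hemem : ∀ s ∈ Sk T1 T2 k, ∀ i, extSeq T1 T2 k s i ∈ Set.Icc T1 T2 := by
    intro s hs i
    obtain ⟨hmono, hge, hle⟩ := hs
    unfold extSeq
    split_ifs with h1 h2
    · exact hmemT1
    · exact ⟨hge _, hle _⟩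
    · exact hmemT2
  have hestep : ∀ s ∈ Sk T1 T2 k, ∀ i, extSeq T1 T2 k s i ≤ extSeq T1 T2 k s (i+1) := by
    intro s hs i
    obtain ⟨hmono, hge, hle⟩ := hs
    unfold extSeq
    split_ifs with h1 h2 h3 h4 h5
    all_goals first
      | omega
      | exact le_refl _
      | exact hge _
      | exact hle _
      | exact hT
      | contradiction
      | exact hmono (Fin.mk_le_mk.mpr (by omega))
  -- the key dichotomy
  have key : ∀ s ∈ Sk T1 T2 k,
      DcTS T1 T2 k Λ s ≤ 1 ∧
      (DcTS T1 T2 k Λ s = 1 ↔ ∀ i ∈ Finset.range (k+1),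
        Λ (extSeq T1 T2 k s (i+1)) - Λ (extSeq T1 T2 k s i) = w / ((k:ℝ)+1)) := by
    intro s hs
    set g : ℕ → ℝ := fun i => Λ (extSeq T1 T2 k s i) with hgdef
    have hΔ0 : ∀ i ∈ Finset.range (k+1), 0 ≤ g (i+1) - g i := by
      intro i _
      have := (hΛmono.monotoneOn) (hemem s hs i) (hemem s hs (i+1)) (hestep s hs i)
      linarith
    have hΔsum : ∑ i ∈ Finset.range (k+1), (g (i+1) - g i) = w := by
      rw [Finset.sum_range_sub g (k+1)]
      show Λ (extSeq T1 T2 k s (k+1)) - Λ (extSeq T1 T2 k s 0) = w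
      rw [he0, hetop, hΛ0, sub_zero]
    set y : ℕ → ℝ := fun i => ((k:ℝ)+1) * ((g (i+1) - g i) / w) with hydef
    have hy0 : ∀ i ∈ Finset.range (k+1), 0 ≤ y i := by
      intro i hi
      have := hΔ0 i hi
      have hyval : y i = ((k:ℝ)+1) * ((g (i+1) - g i) / w) := rfl
      rw [hyval]
      positivity
    have hysum : ∑ i ∈ Finset.range (k+1), y i = ((k+1 : ℕ) : ℝ) := by
      show ∑ i ∈ Finset.range (k+1), ((k:ℝ)+1) * ((g (i+1) - g i) / w) = _
      rw [← Finset.mul_sum, ← Finset.sum_div, hΔsum]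
      push_cast
      field_simp
    have hamgm := amgm_aux (k+1) y hy0 hysum
    have hP0 : 0 ≤ ∏ i ∈ Finset.range (k+1), y i := Finset.prod_nonneg hy0
    have hpow : (((k:ℝ)+1) ^ c) ^ (k+1) = (k:ℝ)+1 := by
      rw [← Real.rpow_natCast (((k:ℝ)+1) ^ c) (k+1), ← Real.rpow_mul hkpos.le]
      push_cast
      rw [hck, Real.rpow_one]
    have hDc : DcTS T1 T2 k Λ s = (∏ i ∈ Finset.range (k+1), y i) ^ c := by
      calc DcTS T1 T2 k Λ s
          = ((k:ℝ)+1) * ∏ i ∈ Finset.range (k+1), ((g (i+1) - g i)/w) ^ c := rfl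
        _ = (((k:ℝ)+1) ^ c) ^ (k+1) * ∏ i ∈ Finset.range (k+1), ((g (i+1) - g i)/w) ^ c := by
            rw [hpow]
        _ = ∏ i ∈ Finset.range (k+1), (((k:ℝ)+1) ^ c * ((g (i+1) - g i)/w) ^ c) := by
            rw [Finset.prod_mul_distrib, Finset.prod_const, Finset.card_range]
        _ = ∏ i ∈ Finset.range (k+1), y i ^ c := by
            refine Finset.prod_congr rfl fun i hi => ?_
            have := hΔ0 i hi
            exact (Real.mul_rpow hkpos.le (by positivity)).symm
        _ = (∏ i ∈ Finset.range (k+1), y i) ^ c := Real.finset_prod_rpow _ _ hy0 c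
    constructor
    · rw [hDc]
      exact Real.rpow_le_one hP0 hamgm.1 hc.le
    constructor
    · intro h1
      rw [hDc] at h1
      have hPy : ∏ i ∈ Finset.range (k+1), y i = 1 := by
        have e1 : (∏ i ∈ Finset.range (k+1), y i) ^ (c * ((k:ℝ)+1))
            = ((∏ i ∈ Finset.range (k+1), y i) ^ c) ^ ((k:ℝ)+1) := Real.rpow_mul hP0 _ _
        rw [hck, Real.rpow_one, h1, Real.one_rpow] at e1
        exact e1
      intro i hi
      have hy1 := hamgm.2 hPy i hi
      have hyval : ((k:ℝ)+1) * ((g (i+1) - g i) / w) = 1 := hy1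
      show g (i+1) - g i = w / ((k:ℝ)+1)
      field_simp at hyval ⊢
      linarith
    · intro hΔ
      have hy1 : ∀ i ∈ Finset.range (k+1), y i = 1 := by
        intro i hi
        show ((k:ℝ)+1) * ((g (i+1) - g i) / w) = 1
        have : g (i+1) - g i = w / ((k:ℝ)+1) := hΔ i hi
        rw [this]
        field_simp
      rw [hDc, Finset.prod_congr rfl hy1, Finset.prod_const_one, Real.one_rpow]
  -- values of Λ on the extended sstar sequence
  have hgs : ∀ j, j ≤ k+1 → Λ (extSeq T1 T2 k sstar j) = (j:ℝ) * w / ((k:ℝ)+1) := by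
    intro j hj
    unfold extSeq
    split_ifs with h1 h2
    · subst h1; simp [hΛ0]
    · rw [hsval ⟨j-1, by omega⟩]
      have hj1 : 1 ≤ j := by omega
      have hcast : (((⟨j-1, by omega⟩ : Fin k) : ℕ) : ℝ) = (j:ℝ) - 1 := by
        show (((j-1 : ℕ)) : ℝ) = (j:ℝ) - 1
        rw [Nat.cast_sub hj1]
        norm_num
      rw [hcast]
      ring_nf
    · have hjk : j = k+1 := by omega
      subst hjk
      show w = _
      push_cast
      field_simp
  refine ⟨hstarSk, ?_, fun s hs => (key s hs).1, ?_⟩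
  · apply ((key sstar hstarSk).2).mpr
    intro i hi
    rw [hgs (i+1) (by simp at hi; omega), hgs i (by simp at hi; omega)]
    push_cast
    ring
  · intro s hs h1
    have hΔ := (key s hs).2.mp h1
    funext i
    apply hΛmono.injOn ⟨hs.2.1 i, hs.2.2 i⟩ (hsmem i)
    have hsum : Λ (extSeq T1 T2 k s (i.1+1)) - Λ (extSeq T1 T2 k s 0)
        = ∑ j ∈ Finset.range (i.1+1), (Λ (extSeq T1 T2 k s (j+1)) - Λ (extSeq T1 T2 k s j)) :=
      (Finset.sum_range_sub (fun j => Λ (extSeq T1 T2 k s j)) (i.1+1)).symm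
    have hconst : ∑ j ∈ Finset.range (i.1+1),
        (Λ (extSeq T1 T2 k s (j+1)) - Λ (extSeq T1 T2 k s j))
        = ((i.1:ℝ)+1) * (w / ((k:ℝ)+1)) := by
      rw [Finset.sum_congr rfl (fun j hj => hΔ j (by
        simp only [Finset.mem_range] at hj ⊢
        omega))]
      rw [Finset.sum_const, Finset.card_range, nsmul_eq_mul]
      push_cast
      ring
    have hext : extSeq T1 T2 k s (i.1+1) = s i := by
      unfold extSeq
      rw [dif_neg (by omega), dif_pos (by omega : i.1+1 ≤ k)]
      exact congrArg s (Fin.ext (by simp))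
    rw [he0 s, hΛ0, sub_zero, hext] at hsum
    rw [hsum, hconst, hsval i]
    ring
end

section
/- Fix real numbers T1 < T2, an integer k ≥ 1, and a vector μ ∈ ℝ^k with T1 = μ_0 < μ_1 < ⋯ < μ_k < μ_{k+1} = T2. Let (m^{(n)})_{n∈ℕ} be a sequence of vectors in ℝ^k with T1 = m^{(n)}_0 ≤ m^{(n)}_1 ≤ ⋯ ≤ m^{(n)}_k ≤ m^{(n)}_{k+1} = T2 such that m^{(n)}_i → μ_i as n → ∞ for every i = 1,…,k. Then the sample Dirichlet depths converge uniformly to the Dirichlet depth: sup_{s ∈ S_k} | ∏_{i=1}^{k+1} ((s_i − s_{i−1})/(m^{(n)}_i − m^{(n)}_{i−1}))^{(m^{(n)}_i − m^{(n)}_{i−1})/(T2−T1)} − ∏_{i=1}^{k+1} ((s_i − s_{i−1})/(μ_i − μ_{i−1}))^{(μ_i − μ_{i−1})/(T2−T1)} | → 0 as n → ∞. -/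
open MeasureTheory Filter Set

section Aux

variable (T1 T2 : ℝ) (k : ℕ)

lemma extSeq_continuous (j : ℕ) :
    Continuous (fun v : Fin k → ℝ => extSeq T1 T2 k v j) := by
  unfold extSeq
  by_cases h0 : j = 0
  · simp only [h0, dif_pos]; exact continuous_const
  · by_cases hj : j ≤ k
    · simp only [h0, hj, dif_neg, dif_pos, not_false_iff]
      exact continuous_apply _
    · simp only [h0, hj, dif_neg, not_false_iff]
      exact continuous_const

lemma isCompact_Sk : IsCompact (Sk T1 T2 k) := by
  have hcl : IsClosed (Sk T1 T2 k) := by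
    have : Sk T1 T2 k =
        (⋂ (i : Fin k) (j : Fin k) (_ : i ≤ j), {s : Fin k → ℝ | s i ≤ s j}) ∩
          ((⋂ i : Fin k, {s : Fin k → ℝ | T1 ≤ s i}) ∩
            ⋂ i : Fin k, {s : Fin k → ℝ | s i ≤ T2}) := by
      ext s
      simp only [Sk, Set.mem_setOf_eq, Set.mem_inter_iff, Set.mem_iInter, Monotone]
    rw [this]
    refine IsClosed.inter ?_ (IsClosed.inter ?_ ?_)
    · exact isClosed_iInter fun i => isClosed_iInter fun j => isClosed_iInter fun _ =>
        isClosed_le (continuous_apply i) (continuous_apply j)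
    · exact isClosed_iInter fun i => isClosed_le continuous_const (continuous_apply i)
    · exact isClosed_iInter fun i => isClosed_le (continuous_apply i) continuous_const
  have hsub : Sk T1 T2 k ⊆ Set.Icc (fun _ => T1) (fun _ => T2) := by
    intro s hs
    exact ⟨fun i => hs.2.1 i, fun i => hs.2.2 i⟩
  exact IsCompact.of_isClosed_subset isCompact_Icc hcl hsub

end Aux

theorem stmt17 (T1 T2 : ℝ) (h : T1 < T2) (k : ℕ) (hk : 1 ≤ k)
    (μ : Fin k → ℝ)
    (hμ : ∀ i ≤ k, extSeq T1 T2 k μ i < extSeq T1 T2 k μ (i + 1))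
    (m : ℕ → Fin k → ℝ)
    (hmord : ∀ n, ∀ i ≤ k, extSeq T1 T2 k (m n) i ≤ extSeq T1 T2 k (m n) (i + 1))
    (hconv : ∀ i : Fin k, Tendsto (fun n => m n i) atTop (nhds (μ i))) :
    TendstoUniformlyOn (fun n s => DcGen T1 T2 k (m n) s) (DcGen T1 T2 k μ)
      atTop (Sk T1 T2 k) := by
  -- abbreviations
  set L : ℝ := T2 - T1 with hL
  have hL0 : 0 < L := by simp [hL]; linarith
  set e : ℕ → (Fin k → ℝ) → ℝ := fun j v => extSeq T1 T2 k v j with he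
  -- the open set of "strictly ordered" parameter vectors
  set U : Set (Fin k → ℝ) :=
    ⋂ i ∈ Finset.range (k + 1), {v : Fin k → ℝ | e i v < e (i + 1) v} with hU
  have hUopen : IsOpen U :=
    isOpen_biInter_finset fun i _ =>
      isOpen_lt (extSeq_continuous T1 T2 k i) (extSeq_continuous T1 T2 k (i + 1))
  have hμU : μ ∈ U := by
    rw [hU]
    simp only [Set.mem_iInter, Finset.mem_range, Set.mem_setOf_eq]
    intro i hi
    exact hμ i (by omega)
  obtain ⟨r, hr, hball⟩ := (Metric.nhds_basis_closedBall.mem_iff).1 (hUopen.mem_nhds hμU)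
  -- the compact set on which we get uniform continuity
  set K : Set ((Fin k → ℝ) × (Fin k → ℝ)) := Metric.closedBall μ r ×ˢ Sk T1 T2 k with hKdef
  have hKcomp : IsCompact K :=
    (isCompact_closedBall μ r).prod (isCompact_Sk T1 T2 k)
  set H : (Fin k → ℝ) × (Fin k → ℝ) → ℝ := fun p => DcGen T1 T2 k p.1 p.2 with hH
  have hHcont : ContinuousOn H K := by
    have : ∀ p ∈ K, ContinuousAt H p := by
      intro p hp
      have hpU : p.1 ∈ U := hball hp.1
      rw [hH]
      simp only [DcGen]
      refine tendsto_finset_prod _ fun i hi => ?_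
      have hib : i ≤ k := by simpa using Nat.lt_succ_iff.mp (Finset.mem_range.mp hi)
      have hgap : e i p.1 < e (i + 1) p.1 := by
        rw [hU] at hpU
        simp only [Set.mem_iInter, Finset.mem_range, Set.mem_setOf_eq] at hpU
        exact hpU i (by omega)
      have hbase : ContinuousAt (fun q : (Fin k → ℝ) × (Fin k → ℝ) =>
          (extSeq T1 T2 k q.2 (i + 1) - extSeq T1 T2 k q.2 i) /
            (extSeq T1 T2 k q.1 (i + 1) - extSeq T1 T2 k q.1 i)) p := by
        apply ContinuousAt.div
        · exact (((extSeq_continuous T1 T2 k (i + 1)).comp continuous_snd).sub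
            ((extSeq_continuous T1 T2 k i).comp continuous_snd)).continuousAt
        · exact (((extSeq_continuous T1 T2 k (i + 1)).comp continuous_fst).sub
            ((extSeq_continuous T1 T2 k i).comp continuous_fst)).continuousAt
        · have := sub_pos.2 hgap
          exact ne_of_gt this
      have hexp : ContinuousAt (fun q : (Fin k → ℝ) × (Fin k → ℝ) =>
          (extSeq T1 T2 k q.1 (i + 1) - extSeq T1 T2 k q.1 i) / (T2 - T1)) p := by
        exact ((((extSeq_continuous T1 T2 k (i + 1)).comp continuous_fst).sub
          ((extSeq_continuous T1 T2 k i).comp continuous_fst)).div_const _).continuousAt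
      refine hbase.rpow hexp (Or.inr ?_)
      exact div_pos (sub_pos.2 hgap) (by linarith)
    exact fun p hp => (this p hp).continuousWithinAt
  have hunif : UniformContinuousOn H K :=
    hKcomp.uniformContinuousOn_of_continuous hHcont
  rw [Metric.tendstoUniformlyOn_iff]
  intro ε hε
  obtain ⟨δ, hδ, hδc⟩ := Metric.uniformContinuousOn_iff.1 hunif ε hε
  have hmconv : Tendsto m atTop (nhds μ) := tendsto_pi_nhds.2 hconv
  have hev : ∀ᶠ n in atTop, dist (m n) μ < min δ r :=
    Metric.tendsto_nhds.mp hmconv (min δ r) (lt_min hδ hr)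
  filter_upwards [hev] with n hn s hs
  have h1 : ((m n, s) : (Fin k → ℝ) × (Fin k → ℝ)) ∈ K :=
    ⟨Metric.mem_closedBall.2 (le_of_lt (lt_of_lt_of_le hn (min_le_right _ _))), hs⟩
  have h2 : ((μ, s) : (Fin k → ℝ) × (Fin k → ℝ)) ∈ K :=
    ⟨Metric.mem_closedBall_self hr.le, hs⟩
  have hd : dist ((m n, s) : (Fin k → ℝ) × (Fin k → ℝ)) (μ, s) < δ := by
    rw [Prod.dist_eq]
    simpa [dist_self, max_eq_left dist_nonneg] using lt_of_lt_of_le hn (min_le_left δ r)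
  have := hδc _ h1 _ h2 hd
  rw [dist_comm]
  exact this
end
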